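/- arXiv:cs/0501026 — 2 statements merged into one kernel-verified Lean document; each statement's English description precedes it below -/
import Mathlib

section
/- If f is a minterm-transitive Boolean function on n variables, then s(f) = Ω(n^{1/3}); concretely, if f = p^G for a transitive group G and a pattern p of support size k ≥ 1, then s(f) ≥ max(k/2, c·n/k²) for an absolute constant c > 0, and hence s(f) ≥ c'·n^{1/3}. -/
/-- Flip the `i`-th bit of `x`. -/
def flipBit {n : ℕ} (x : Fin n → Bool) (i : Fin n) : Fin n → Bool :=
  fun j => if j = i then !x j else x j

/-- Flip all bits of `x` in the block `B`. -/
def flipSet {n : ℕ} (x : Fin n → Bool) (B : Finset (Fin n)) : Fin n → Bool :=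
  fun j => if j ∈ B then !x j else x j

/-- Sensitivity of `f` at the input `x`. -/
def sensAt {n : ℕ} (f : (Fin n → Bool) → Bool) (x : Fin n → Bool) : ℕ :=
  (Finset.univ.filter fun i => f (flipBit x i) ≠ f x).card

/-- Sensitivity of `f`. -/
def sens {n : ℕ} (f : (Fin n → Bool) → Bool) : ℕ :=
  Finset.univ.sup fun x => sensAt f x

/-- 0-sensitivity of `f`: max sensitivity over inputs where `f` is 0. -/
def sens0 {n : ℕ} (f : (Fin n → Bool) → Bool) : ℕ :=
  (Finset.univ.filter fun x => f x = false).sup fun x => sensAt f x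

/-- 1-sensitivity of `f`: max sensitivity over inputs where `f` is 1. -/
def sens1 {n : ℕ} (f : (Fin n → Bool) → Bool) : ℕ :=
  (Finset.univ.filter fun x => f x = true).sup fun x => sensAt f x

/-- Block sensitivity of `f` at `x`: the largest number of pairwise disjoint
nonempty blocks each of whose flips changes the value of `f` at `x`. -/
noncomputable def bsensAt {n : ℕ} (f : (Fin n → Bool) → Bool) (x : Fin n → Bool) : ℕ :=
  sSup {r : ℕ | ∃ B : Fin r → Finset (Fin n),
    (∀ j, (B j).Nonempty ∧ f (flipSet x (B j)) ≠ f x) ∧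
    ∀ j j', j ≠ j' → Disjoint (B j) (B j')}

/-- Block sensitivity of `f`. -/
noncomputable def bsens {n : ℕ} (f : (Fin n → Bool) → Bool) : ℕ :=
  Finset.univ.sup fun x => bsensAt f x

/-- A permutation group on `[n]` is transitive. -/
def IsTransitive {n : ℕ} (G : Subgroup (Equiv.Perm (Fin n))) : Prop :=
  ∀ i j : Fin n, ∃ π ∈ G, π i = j

open Classical in
/-- The minterm-transitive function `p^G` defined by the partial assignment
`p` with support `S`: it is 1 on `x` iff `x` extends some `G`-shift of `p`. -/
noncomputable def mintermFn {n : ℕ} (G : Subgroup (Equiv.Perm (Fin n)))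
    (S : Finset (Fin n)) (p : Fin n → Bool) : (Fin n → Bool) → Bool :=
  fun x => decide (∃ π ∈ G, ∀ i ∈ S, x (π i) = p i)

/-!
On the one side, the input that agrees with `p` on `S` and is set to the complement of the majority
value `v` of `p` elsewhere is a 1-input, and flipping any of the `≥ k/2` coordinates of `S` carrying
`v` destroys every `G`-shift of `p`, since those all need as many `v`'s as `p` has.

On the other side, take a maximal family of pairwise disjoint translates `π S`, `π ∈ G`.  Every
translate meets their union `U`, and averaging over `G` (transitivity makes `π i` uniform) gives
`n ≤ k |U| = k² · #translates`.  Starting from the constant `¬ p i₀` input, set to `p i₀` a maximal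
set `W` of positions, inside the shifted copies of `{i ∈ S | p i = p i₀} \ {i₀}`, keeping the
function 0.  In each translate `π S` some position is then sensitive: either a position of the
copy outside `W`, by maximality, or, if the whole copy lies in `W`, the position `π i₀`, whose flip
completes the `π`-shift of `p`.  Disjointness makes these positions distinct, so `s⁰(f) ≥ n / k²`.

Finally `n ≤ k² s ≤ (2s)² s`, whence `n^{1/3} ≤ 2s`.
-/

open Finset

section Sensitivity

variable {n : ℕ} {f : (Fin n → Bool) → Bool} {x : Fin n → Bool}

theorem sensAt_le_sens0 (hx : f x = false) : sensAt f x ≤ sens0 f :=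
  le_sup (mem_filter.mpr ⟨mem_univ x, hx⟩)

theorem sensAt_le_sens1 (hx : f x = true) : sensAt f x ≤ sens1 f :=
  le_sup (mem_filter.mpr ⟨mem_univ x, hx⟩)

theorem sens0_le_sens (f : (Fin n → Bool) → Bool) : sens0 f ≤ sens f :=
  sup_mono (filter_subset _ _)

theorem sens1_le_sens (f : (Fin n → Bool) → Bool) : sens1 f ≤ sens f :=
  sup_mono (filter_subset _ _)

theorem flipSet_empty (x : Fin n → Bool) : flipSet x ∅ = x := by
  funext j
  simp [flipSet]

theorem flipBit_flipSet_of_notMem {W : Finset (Fin n)} {b : Fin n} (hb : b ∉ W) :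
    flipBit (flipSet x W) b = flipSet x (insert b W) := by
  funext j
  by_cases hj : j = b
  · subst hj
    simp [flipBit, flipSet, hb]
  · simp [flipBit, flipSet, hj]

theorem exists_maximal_flipSet_eq_false (hx : f x = false) (O : Finset (Fin n)) :
    ∃ W ⊆ O, f (flipSet x W) = false ∧ ∀ b ∈ O \ W, f (flipBit (flipSet x W) b) = true := by
  have hne : (O.powerset.filter fun W => f (flipSet x W) = false).Nonempty :=
    ⟨∅, mem_filter.mpr ⟨empty_mem_powerset O, by rwa [flipSet_empty]⟩⟩
  obtain ⟨W, hW, hmax⟩ := exists_max_image _ card hne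
  obtain ⟨hWO, hWf⟩ := mem_filter.mp hW
  refine ⟨W, mem_powerset.mp hWO, hWf, fun b hb => ?_⟩
  obtain ⟨hbO, hbW⟩ := mem_sdiff.mp hb
  rw [flipBit_flipSet_of_notMem hbW, ← Bool.not_eq_false]
  intro hfalse
  have := hmax (insert b W)
    (mem_filter.mpr ⟨mem_powerset.mpr (insert_subset hbO (mem_powerset.mp hWO)), hfalse⟩)
  rw [card_insert_of_notMem hbW] at this
  omega

end Sensitivity

theorem Finset.card_le_card_of_pairwiseDisjoint {ι α : Type*} {s : Finset ι} {t : ι → Finset α}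
    {A : Finset α} (hdisj : (s : Set ι).PairwiseDisjoint t) (hmeet : ∀ i ∈ s, ∃ a ∈ A, a ∈ t i) :
    #s ≤ #A := by
  refine card_le_card_of_forall_subsingleton (fun i a => a ∈ t i) hmeet fun a _ => ?_
  rintro i ⟨hi, hai⟩ j ⟨hj, haj⟩
  exact hdisj.elim_finset hi hj a hai haj

section Minterm

variable {n : ℕ} {G : Subgroup (Equiv.Perm (Fin n))} {S : Finset (Fin n)} {p : Fin n → Bool}

theorem mintermFn_eq_true_iff {x : Fin n → Bool} :
    mintermFn G S p x = true ↔ ∃ π ∈ G, ∀ i ∈ S, x (π i) = p i := by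
  simp [mintermFn]

theorem card_filter_eq_le_of_extends {x : Fin n → Bool} {π : Equiv.Perm (Fin n)}
    (hx : ∀ i ∈ S, x (π i) = p i) (v : Bool) :
    #{i ∈ S | p i = v} ≤ #{j | x j = v} := by
  rw [← card_image_of_injective _ π.injective]
  refine card_le_card fun j hj => ?_
  obtain ⟨i, hi, rfl⟩ := mem_image.mp hj
  obtain ⟨hiS, hpi⟩ := mem_filter.mp hi
  simp [hx i hiS, hpi]

theorem exists_card_le_two_mul_card_filter_eq (S : Finset (Fin n)) (p : Fin n → Bool) :
    ∃ v : Bool, #S ≤ 2 * #{i ∈ S | p i = v} := by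
  have := card_filter_add_card_filter_not (s := S) (fun i => p i = true)
  simp only [Bool.not_eq_true] at this
  by_cases h : #S ≤ 2 * #{i ∈ S | p i = true}
  · exact ⟨true, h⟩
  · exact ⟨false, by omega⟩

theorem card_le_two_mul_sens1 (G : Subgroup (Equiv.Perm (Fin n))) (S : Finset (Fin n))
    (p : Fin n → Bool) : #S ≤ 2 * sens1 (mintermFn G S p) := by
  obtain ⟨v, hv⟩ := exists_card_le_two_mul_card_filter_eq S p
  set Sv := S.filter fun i => p i = v
  let y : Fin n → Bool := fun j => if j ∈ S then p j else !v
  have hy : mintermFn G S p y = true :=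
    mintermFn_eq_true_iff.mpr ⟨1, G.one_mem, fun i hi => by simp [y, hi]⟩
  -- After flipping `b ∈ Sv`, fewer than `#Sv` coordinates carry `v`.
  have hflip : ∀ b ∈ Sv, mintermFn G S p (flipBit y b) = false := by
    intro b hb
    rw [← Bool.not_eq_true, mintermFn_eq_true_iff]
    rintro ⟨π, -, hπ⟩
    have hsub : ({j | flipBit y b j = v} : Finset (Fin n)) ⊆ Sv.erase b := by
      intro j hj
      have hpb := (mem_filter.mp hb).2
      by_cases hjb : j = b
      · subst hjb
        simp [flipBit, y, (mem_filter.mp hb).1, hpb] at hj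
      · by_cases hjS : j ∈ S <;> simp_all [flipBit, y, Sv]
    have := (card_filter_eq_le_of_extends hπ v).trans (card_le_card hsub)
    exact absurd this (card_erase_lt_of_mem hb).not_ge
  have hsens : Sv ⊆ ({i | mintermFn G S p (flipBit y i) ≠ mintermFn G S p y} : Finset _) :=
    fun b hb => by simp [hflip b hb, hy]
  exact hv.trans (Nat.mul_le_mul_left 2 ((card_le_card hsens).trans (sensAt_le_sens1 hy)))

end Minterm

section Transitive

open scoped Classical

variable {n : ℕ} {G : Subgroup (Equiv.Perm (Fin n))}

theorem IsTransitive.card_filter_apply_mem_eq (hG : IsTransitive G) (U : Finset (Fin n))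
    (i j : Fin n) :
    #{π : G | (π : Equiv.Perm (Fin n)) i ∈ U} = #{π : G | (π : Equiv.Perm (Fin n)) j ∈ U} := by
  obtain ⟨τ, hτ, hτj⟩ := hG j i
  refine card_equiv (Equiv.mulRight ⟨τ, hτ⟩) fun π => ?_
  simp [hτj]

theorem IsTransitive.card_mul_card_filter_apply_mem (hG : IsTransitive G) (U : Finset (Fin n))
    (i : Fin n) : n * #{π : G | (π : Equiv.Perm (Fin n)) i ∈ U} = #U * Fintype.card G := by
  calc n * #{π : G | (π : Equiv.Perm (Fin n)) i ∈ U}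
      = ∑ j : Fin n, #{π : G | (π : Equiv.Perm (Fin n)) j ∈ U} := by
        simp [hG.card_filter_apply_mem_eq U _ i]
    _ = ∑ π : G, #{j | (π : Equiv.Perm (Fin n)) j ∈ U} := by
        simp only [card_filter]
        exact sum_comm
    _ = ∑ _π : G, #U := by
        refine sum_congr rfl fun π _ => ?_
        rw [card_filter]
        exact (Equiv.sum_comp (π : Equiv.Perm (Fin n)) fun j => if j ∈ U then 1 else 0).trans
          (by simp)
    _ = #U * Fintype.card G := by simp [mul_comm]

theorem IsTransitive.le_card_mul_card (hG : IsTransitive G) {S U : Finset (Fin n)}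
    (hU : ∀ π ∈ G, ∃ i ∈ S, π i ∈ U) : n ≤ #S * #U := by
  have hmeet : Fintype.card G ≤ ∑ π : G, #{i ∈ S | (π : Equiv.Perm (Fin n)) i ∈ U} := by
    refine (card_nsmul_le_sum univ _ 1 fun π _ => ?_).trans_eq' (by simp)
    obtain ⟨i, hi, hπi⟩ := hU π π.2
    exact card_pos.mpr ⟨i, mem_filter.mpr ⟨hi, hπi⟩⟩
  have hcount : n * ∑ π : G, #{i ∈ S | (π : Equiv.Perm (Fin n)) i ∈ U}
      = #S * #U * Fintype.card G := by
    simp only [card_filter, mul_sum]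
    rw [sum_comm]
    simp only [← mul_sum, ← card_filter, hG.card_mul_card_filter_apply_mem]
    simp only [sum_const, smul_eq_mul]
    ring
  have hpos : 0 < Fintype.card G := Fintype.card_pos
  nlinarith

end Transitive

section Translates

variable {n : ℕ} {G : Subgroup (Equiv.Perm (Fin n))} {S : Finset (Fin n)}

open scoped Classical in
theorem exists_maximal_pairwiseDisjoint_translates (G : Subgroup (Equiv.Perm (Fin n)))
    (hS : S.Nonempty) :
    ∃ P : Finset (Equiv.Perm (Fin n)), (∀ π ∈ P, π ∈ G) ∧
      (P : Set (Equiv.Perm (Fin n))).PairwiseDisjoint (fun π => S.image π) ∧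
      ∀ π ∈ G, ∃ i ∈ S, π i ∈ P.biUnion fun σ => S.image σ := by
  let valid := fun P : Finset (Equiv.Perm (Fin n)) =>
    (∀ π ∈ P, π ∈ G) ∧ (P : Set (Equiv.Perm (Fin n))).PairwiseDisjoint (fun π => S.image π)
  obtain ⟨P, hP, hmax⟩ := exists_max_image (univ.filter valid) card
    ⟨∅, mem_filter.mpr ⟨mem_univ _, by simp, by simp⟩⟩
  obtain ⟨hPG, hPdisj⟩ := (mem_filter.mp hP).2
  refine ⟨P, hPG, hPdisj, fun π hπ => ?_⟩
  by_contra! hmiss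
  have hdisj : ∀ σ ∈ P, Disjoint (S.image π) (S.image σ) := fun σ hσ =>
    disjoint_left.mpr fun a ha haσ => by
      obtain ⟨i, hi, rfl⟩ := mem_image.mp ha
      exact hmiss i hi (mem_biUnion.mpr ⟨σ, hσ, haσ⟩)
  have hπP : π ∉ P := fun hπP => by
    obtain ⟨i, hi⟩ := hS
    exact hmiss i hi (mem_biUnion.mpr ⟨π, hπP, mem_image_of_mem _ hi⟩)
  have hvalid : valid (insert π P) := by
    refine ⟨fun σ hσ => ?_, ?_⟩
    · rcases mem_insert.mp hσ with rfl | hσ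
      exacts [hπ, hPG σ hσ]
    · rw [coe_insert]
      exact hPdisj.insert fun σ hσ _ => hdisj σ hσ
  have := hmax _ (mem_filter.mpr ⟨mem_univ _, hvalid⟩)
  rw [card_insert_of_notMem hπP] at this
  omega

theorem IsTransitive.le_card_mul_card_mul_card (hG : IsTransitive G)
    {P : Finset (Equiv.Perm (Fin n))}
    (hP : (P : Set (Equiv.Perm (Fin n))).PairwiseDisjoint (fun π => S.image π))
    (hcover : ∀ π ∈ G, ∃ i ∈ S, π i ∈ P.biUnion fun σ => S.image σ) :
    n ≤ #S * (#P * #S) := by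
  have hU : #(P.biUnion fun σ => S.image σ) = #P * #S := by
    rw [card_biUnion hP, sum_const_nat fun σ _ => card_image_of_injective S σ.injective]
  exact hU ▸ hG.le_card_mul_card hcover

end Translates

section ZeroSensitivity

variable {n : ℕ} {G : Subgroup (Equiv.Perm (Fin n))} {S : Finset (Fin n)} {p : Fin n → Bool}

theorem card_le_sens0_of_pairwiseDisjoint (hS : S.Nonempty) {P : Finset (Equiv.Perm (Fin n))}
    (hPG : ∀ π ∈ P, π ∈ G)
    (hP : (P : Set (Equiv.Perm (Fin n))).PairwiseDisjoint (fun π => S.image π)) :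
    #P ≤ sens0 (mintermFn G S p) := by
  obtain ⟨i₀, hi₀⟩ := hS
  set v := p i₀
  set C := (S.filter fun i => p i = v).erase i₀
  set O := P.biUnion fun π => C.image π
  have hO : ∀ π ∈ P, ∀ i ∈ S, π i ∈ O → i ∈ C := by
    intro π hπ i hi hiO
    obtain ⟨σ, hσ, hiσ⟩ := mem_biUnion.mp hiO
    obtain ⟨j, hj, hji⟩ := mem_image.mp hiσ
    obtain rfl : σ = π := hP.elim_finset hσ hπ _
      (mem_image_of_mem σ (mem_of_mem_erase hj |> mem_filter.mp |>.1)) (hji ▸ mem_image_of_mem π hi)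
    rwa [← σ.injective hji]
  let x₀ : Fin n → Bool := fun _ => !v
  have hx₀ : mintermFn G S p x₀ = false := by
    rw [← Bool.not_eq_true, mintermFn_eq_true_iff]
    rintro ⟨π, -, hπ⟩
    simpa [x₀, v] using hπ i₀ hi₀
  obtain ⟨W, hWO, hWf, hWmax⟩ := exists_maximal_flipSet_eq_false hx₀ O
  have hx : ∀ j, flipSet x₀ W j = if j ∈ W then v else !v := fun j => by
    by_cases hj : j ∈ W <;> simp [flipSet, x₀, hj]
  have hcomplete : ∀ π ∈ P, C.image π ⊆ W →
      mintermFn G S p (flipBit (flipSet x₀ W) (π i₀)) = true := by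
    intro π hπ hCW
    refine mintermFn_eq_true_iff.mpr ⟨π, hPG π hπ, fun i hi => ?_⟩
    have hi₀W : π i₀ ∉ W := fun h => by simpa [C] using hO π hπ i₀ hi₀ (hWO h)
    by_cases hii₀ : i = i₀
    · subst hii₀
      simp [flipBit, hx, hi₀W, v]
    have hval : flipBit (flipSet x₀ W) (π i₀) (π i) = flipSet x₀ W (π i) := by
      simp [flipBit, hii₀]
    rw [hval, hx]
    by_cases hpi : p i = v
    · have hiC : i ∈ C := mem_erase.mpr ⟨hii₀, mem_filter.mpr ⟨hi, hpi⟩⟩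
      simp [hCW (mem_image_of_mem π hiC), hpi]
    · have hiW : π i ∉ W := fun h => by simpa [C, hpi] using hO π hπ i hi (hWO h)
      simpa [hiW] using (Bool.eq_not_of_ne hpi).symm
  have hmeet : ∀ π ∈ P, ∃ b ∈ ({b | mintermFn G S p (flipBit (flipSet x₀ W) b) ≠
      mintermFn G S p (flipSet x₀ W)} : Finset (Fin n)), b ∈ S.image π := by
    intro π hπ
    by_cases hCW : C.image π ⊆ W
    · exact ⟨π i₀, by simp [hcomplete π hπ hCW, hWf], mem_image_of_mem π hi₀⟩
    · obtain ⟨b, hbC, hbW⟩ := not_subset.mp hCW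
      have hbO : b ∈ O \ W := mem_sdiff.mpr ⟨mem_biUnion.mpr ⟨π, hπ, hbC⟩, hbW⟩
      exact ⟨b, by simp [hWmax b hbO, hWf],
        image_subset_image ((erase_subset _ _).trans (filter_subset _ _)) hbC⟩
  exact (card_le_card_of_pairwiseDisjoint hP hmeet).trans (sensAt_le_sens0 hWf)

theorem IsTransitive.le_sq_card_mul_sens0 (hG : IsTransitive G) (hS : S.Nonempty) :
    n ≤ #S ^ 2 * sens0 (mintermFn G S p) := by
  obtain ⟨P, hPG, hP, hcover⟩ := exists_maximal_pairwiseDisjoint_translates G hS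
  calc n ≤ #S * (#P * #S) := hG.le_card_mul_card_mul_card hP hcover
    _ = #S ^ 2 * #P := by ring
    _ ≤ #S ^ 2 * sens0 (mintermFn G S p) :=
        Nat.mul_le_mul_left _ (card_le_sens0_of_pairwiseDisjoint hS hPG hP)

end ZeroSensitivity

/-- Minterm-transitive functions have sensitivity `Ω(n^{1/3})`: there are
absolute constants `c, c' > 0` such that for every minterm-transitive
`f = p^G` with pattern support size `k ≥ 1`, `s(f) ≥ max(k/2, c·n/k²)`
and hence `s(f) ≥ c'·n^{1/3}`. -/
theorem sens_transitive_lower_bound :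
    ∃ c : ℝ, 0 < c ∧ ∃ c' : ℝ, 0 < c' ∧
      ∀ (n k : ℕ) (G : Subgroup (Equiv.Perm (Fin n))), IsTransitive G →
        ∀ (S : Finset (Fin n)) (p : Fin n → Bool), S.card = k → 1 ≤ k →
          (((k : ℝ) / 2 ≤ (sens (mintermFn G S p) : ℝ)) ∧
            c * ((n : ℝ) / (k : ℝ) ^ 2) ≤ (sens (mintermFn G S p) : ℝ)) ∧
          c' * (n : ℝ) ^ ((1 : ℝ) / 3) ≤ (sens (mintermFn G S p) : ℝ) := by
  refine ⟨1, one_pos, 1 / 2, by norm_num, fun n k G hG S p hSk hk => ?_⟩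
  set s := sens (mintermFn G S p)
  have h1 : k ≤ 2 * s := hSk ▸ (card_le_two_mul_sens1 G S p).trans
    (Nat.mul_le_mul_left 2 (sens1_le_sens _))
  have h0 : n ≤ k ^ 2 * s := hSk ▸ (hG.le_sq_card_mul_sens0 (card_pos.mp (by omega))).trans
    (Nat.mul_le_mul_left _ (sens0_le_sens _))
  have hcube : n ≤ (2 * s) ^ 3 := by nlinarith [Nat.pow_le_pow_left h1 2]
  have hk₀ : (0 : ℝ) < k := by exact_mod_cast hk
  refine ⟨⟨by rw [div_le_iff₀ two_pos]; exact_mod_cast (mul_comm 2 s ▸ h1), ?_⟩, ?_⟩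
  · rw [one_mul, div_le_iff₀ (by positivity)]
    exact_mod_cast (mul_comm (k ^ 2) s ▸ h0)
  · calc 1 / 2 * (n : ℝ) ^ ((1 : ℝ) / 3)
        ≤ 1 / 2 * (((2 * s : ℕ) : ℝ) ^ 3) ^ ((1 : ℝ) / 3) := by
          gcongr
          exact_mod_cast hcube
      _ = s := by
          have hthird : (1 : ℝ) / 3 = ((3 : ℕ) : ℝ)⁻¹ := by norm_num
          rw [hthird, Real.pow_rpow_inv_natCast (by positivity) three_ne_zero]
          push_cast
          ring
end

section
/- Let k ≥ 8, n ≥ k², and f : {0,1}^n → {0,1} be defined by f(x) = 1 iff x, viewed cyclically, contains a contiguous substring z of length k² with g(z) = 1 (g as in the pattern: block 1 = 110^{k-2}, first five bits of blocks 2..k are 1, last three bits of block k are 1). Then the 1-sensitivity of f satisfies s¹(f) ≥ 6k−2; in particular s¹(f) = Ω(k). -/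
/-- The pattern predicate defining `g : {0,1}^{k²} → {0,1}`, reading a word as
`k` blocks of length `k`: block 1 equals `110^{k-2}`, the first five bits of
blocks `2..k` are 1, and the last three bits of block `k` are 1. -/
def GPat (k : ℕ) (z : ℕ → Bool) : Prop :=
  (∀ t < k, z t = decide (t < 2)) ∧
  (∀ j, 1 ≤ j → j < k → ∀ t < 5, z (j * k + t) = true) ∧
  (∀ t, k - 3 ≤ t → t < k → z ((k - 1) * k + t) = true)

open Classical in
/-- The cyclically invariant function `f : {0,1}^n → {0,1}` with
`f(x) = 1` iff `x`, viewed cyclically, contains a contiguous length-`k²`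
substring on which `g` evaluates to 1. -/
noncomputable def cycPatFn (k n : ℕ) (hn : 0 < n) : (Fin n → Bool) → Bool :=
  fun x => decide (∃ ℓ : ℕ, GPat k (fun t => x ⟨(ℓ + t) % n, Nat.mod_lt _ hn⟩))

/-!
On the witness `x`, the indicator of the `5k` positions at which `g` demands a `1`, `f` is `1`.
Flipping a `1` of `x` leaves only `5k - 1` ones, too few for any cyclic shift of the pattern.
Flipping one of the `k - 2` zeros of block 1 creates no new occurrence either: inside the first
`k²` positions every window of `k - 2` consecutive positions now contains a `1`, so the zero run
of an occurrence has to end at a wrap-around past position `n - 1`; then the five ones of its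
second block land among the positions `0, …, k`, where the only ones are `0`, `1`, `k` and the
flipped bit. Altogether `5k + (k - 2)` positions of `x` are sensitive.
-/

open Finset

/-- The positions of a length-`k²` word at which `GPat k` demands a `1`. -/
def PatOne (k m : ℕ) : Prop :=
  m < 2 ∨ (k ≤ m ∧ m < k * k ∧ m % k < 5) ∨ (k * k - 3 ≤ m ∧ m < k * k)

instance (k : ℕ) : DecidablePred (PatOne k) := fun _ => by unfold PatOne; infer_instance

section PatOne

variable {k m : ℕ}

theorem PatOne.lt_mul_self (hk : 2 ≤ k) (h : PatOne k m) : m < k * k := by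
  have : 2 * k ≤ k * k := Nat.mul_le_mul_right k hk
  unfold PatOne at h
  omega

theorem PatOne.lt_two_or_eq_of_le (hk : 3 ≤ k) (h : PatOne k m) (hm : m ≤ k) :
    m < 2 ∨ m = k := by
  have : 3 * k ≤ k * k := Nat.mul_le_mul_right k hk
  unfold PatOne at h
  omega

theorem GPat.eq_true_of_patOne {z : ℕ → Bool} (hk : 3 ≤ k) (hz : GPat k z) (hm : PatOne k m) :
    z m = true := by
  obtain ⟨hblock1, hblocks, hlast⟩ := hz
  have hdiv := Nat.div_add_mod m k
  rcases hm with hm | ⟨hkm, hmk, hmod⟩ | ⟨hm3, hmk⟩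
  · simpa [hm] using hblock1 m (by omega)
  · have hq : 1 ≤ m / k := (Nat.one_le_div_iff (by omega)).2 hkm
    have hqk : m / k < k := (Nat.div_lt_iff_lt_mul (by omega)).2 hmk
    simpa [mul_comm, hdiv] using hblocks (m / k) hq hqk (m % k) hmod
  · have h3k : 3 * k ≤ k * k := Nat.mul_le_mul_right k hk
    have hsub : (k - 1) * k + k = k * k := by
      rw [Nat.sub_one_mul]; exact Nat.sub_add_cancel (Nat.le_mul_self k)
    have := hlast (m - (k - 1) * k) (by omega) (by omega)
    rwa [Nat.add_sub_cancel' (show (k - 1) * k ≤ m by omega)] at this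

theorem gPat_of_eq_patOne {z : ℕ → Bool} (hk : 5 ≤ k)
    (hz : ∀ m < k * k, z m = decide (PatOne k m)) : GPat k z := by
  have h5k : 5 * k ≤ k * k := Nat.mul_le_mul_right k hk
  have hblock {j t : ℕ} (hj : j < k) (ht : t < k) : k * j + t < k * k := by
    have : k * j + k ≤ k * k := by rw [← Nat.mul_succ]; exact Nat.mul_le_mul_left k hj
    omega
  refine ⟨fun t ht => ?_, fun j hj hjk t ht => ?_, fun t ht3 htk => ?_⟩
  · rw [hz t (by omega)]
    exact decide_eq_decide.2 (by unfold PatOne; omega)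
  · have hkj : k ≤ k * j := Nat.le_mul_of_pos_right k hj
    rw [mul_comm, hz _ (hblock hjk (by omega)), decide_eq_true_eq, PatOne,
      Nat.mul_add_mod, Nat.mod_eq_of_lt (by omega : t < k)]
    exact Or.inr (Or.inl ⟨by omega, hblock hjk (by omega), ht⟩)
  · have hsub := Nat.sub_one_mul k k
    rw [hz _ (by omega), decide_eq_true_eq]
    exact Or.inr (Or.inr ⟨by omega, by omega⟩)

theorem exists_patOne_or_eq_add {i s : ℕ} (hk : 3 ≤ k) (hi : 2 ≤ i) (hik : i < k)
    (hs : s < k * k) : ∃ d < k - 2, s + d < k * k ∧ (PatOne k (s + d) ∨ s + d = i) := by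
  have h3k : 3 * k ≤ k * k := Nat.mul_le_mul_right k hk
  have hmod : s % k < k := Nat.mod_lt s (by omega)
  have hdiv := Nat.div_add_mod s k
  by_cases hs2 : s < 2
  · exact ⟨0, by omega, by omega, Or.inl (Or.inl (by omega))⟩
  by_cases hsi : s ≤ i
  · exact ⟨i - s, by omega, by omega, Or.inr (by omega)⟩
  by_cases hsk : s < k
  · refine ⟨k - s, by omega, by omega, Or.inl (Or.inr (Or.inl ⟨by omega, by omega, ?_⟩))⟩
    rw [Nat.add_sub_cancel' hsk.le, Nat.mod_self]
    omega
  by_cases hpat : s % k < 5 ∨ k * k - 3 ≤ s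
  · refine ⟨0, by omega, by omega, Or.inl ?_⟩
    rw [add_zero]
    unfold PatOne
    omega
  -- the next `1` is the start of the next block, or the tail `k² - 3` of the last one
  have hnext : k * (s / k + 1) = s - s % k + k := by rw [Nat.mul_succ]; omega
  by_cases hlast : k * (s / k + 1) < k * k
  · refine ⟨k - s % k, by omega, by omega, Or.inl (Or.inr (Or.inl ⟨by omega, by omega, ?_⟩))⟩
    rw [show s + (k - s % k) = k * (s / k + 1) by omega, Nat.mul_mod_right]
    omega
  · exact ⟨k * k - 3 - s, by omega, by omega, Or.inl (Or.inr (Or.inr ⟨by omega, by omega⟩))⟩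

/-- `PatOne k p ∨ p = i` are the ones of the witness with bit `i` of block 1 set: no cyclic window
of them shows `k - 2` zeros followed by five ones. -/
theorem not_cyclic_gap_run {n i ℓ : ℕ} (hk : 4 ≤ k) (hn : k * k ≤ n) (hi : 2 ≤ i) (hik : i < k)
    (hgap : ∀ t, 2 ≤ t → t < k → ¬ (PatOne k ((ℓ + t) % n) ∨ (ℓ + t) % n = i))
    (hrun : ∀ t < 5, PatOne k ((ℓ + (k + t)) % n) ∨ (ℓ + (k + t)) % n = i) : False := by
  have h4k : 4 * k ≤ k * k := Nat.mul_le_mul_right k hk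
  set s := (ℓ + 2) % n with hs
  have hsn : s < n := Nat.mod_lt _ (by omega)
  have hshift (d : ℕ) : (ℓ + (2 + d)) % n = (s + d) % n := by
    rw [hs, Nat.mod_add_mod, add_assoc]
  have hrun' (t : ℕ) (ht : t < 5) :
      PatOne k ((s + (k - 2 + t)) % n) ∨ (s + (k - 2 + t)) % n = i := by
    rw [← hshift, show 2 + (k - 2 + t) = k + t by omega]
    exact hrun t ht
  by_cases hsk : s < k * k
  · obtain ⟨d, hd, hdk, hone⟩ := exists_patOne_or_eq_add (by omega) hi hik hsk
    apply hgap (2 + d) (by omega) (by omega)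
    rwa [hshift, Nat.mod_eq_of_lt (by omega)]
  have hlt {p : ℕ} (h : PatOne k p ∨ p = i) : p < k * k := by
    rcases h with h | rfl
    exacts [h.lt_mul_self (by omega), by omega]
  have hwrap : n ≤ s + (k - 2) := by
    by_contra! h
    have := hlt (hrun' 0 (by omega))
    rw [Nat.mod_eq_of_lt (by omega)] at this
    omega
  obtain ⟨p, hp⟩ : ∃ p, s + (k - 2) = n + p := ⟨s + (k - 2) - n, by omega⟩
  -- after wrapping around, four ones of the run land among the positions `0, …, k`
  have hsmall (t : ℕ) (ht : t < 4) : p + t < 2 ∨ p + t = k ∨ p + t = i := by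
    have hmod : (s + (k - 2 + t)) % n = p + t := by
      rw [← add_assoc, hp, add_assoc, Nat.add_mod_left, Nat.mod_eq_of_lt (by omega)]
    rcases hmod ▸ hrun' t (by omega) with h | h
    · have := h.lt_two_or_eq_of_le (by omega) (by omega)
      omega
    · omega
  have := hsmall 0 (by omega)
  have := hsmall 1 (by omega)
  have := hsmall 2 (by omega)
  have := hsmall 3 (by omega)
  omega

end PatOne

section Cube

variable {n : ℕ}

theorem flipBit_eq_true_iff_of_eq_false {x : Fin n → Bool} {i j : Fin n} (hi : x i = false) :
    flipBit x i j = true ↔ x j = true ∨ j = i := by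
  by_cases hj : j = i
  · subst hj; simp [flipBit, hi]
  · simp [flipBit, hj]

theorem filter_flipBit_eq_erase {x : Fin n → Bool} {i : Fin n} (hi : x i = true) :
    univ.filter (fun j => flipBit x i j = true) = (univ.filter fun j => x j = true).erase i := by
  ext j
  by_cases hj : j = i
  · subst hj; simp [flipBit, hi]
  · simp [flipBit, hj]

theorem card_le_card_filter_of_shift (hn : 0 < n) {y : Fin n → Bool} {ℓ : ℕ} {A : Finset (Fin n)}
    (hA : ∀ j ∈ A, y ⟨(ℓ + j) % n, Nat.mod_lt _ hn⟩ = true) :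
    #A ≤ #(univ.filter fun j => y j = true) := by
  refine card_le_card_of_injOn (fun j => ⟨(ℓ + j) % n, Nat.mod_lt _ hn⟩)
    (fun j hj => by simpa using hA j hj) fun a _ b _ hab => Fin.ext ?_
  have : (a : ℕ) ≡ b [MOD n] := Nat.ModEq.add_left_cancel' ℓ (congrArg Fin.val hab)
  rwa [Nat.ModEq, Nat.mod_eq_of_lt a.isLt, Nat.mod_eq_of_lt b.isLt] at this

theorem card_le_sensAt {f : (Fin n → Bool) → Bool} {x : Fin n → Bool} {A : Finset ℕ}
    (hA : ∀ m ∈ A, ∃ i : Fin n, (i : ℕ) = m ∧ f (flipBit x i) ≠ f x) : #A ≤ sensAt f x := by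
  calc #A ≤ #((univ.filter fun i => f (flipBit x i) ≠ f x).image Fin.val) :=
        card_le_card fun m hm => by
          obtain ⟨i, rfl, hi⟩ := hA m hm
          exact mem_image_of_mem _ (by simpa using hi)
    _ ≤ sensAt f x := card_image_le

end Cube

section Witness

variable {k n : ℕ}

def patWitness (n k : ℕ) : Fin n → Bool := fun j => decide (PatOne k j)

theorem cycPatFn_patWitness (hk : 5 ≤ k) (hn : k * k ≤ n) (hpos : 0 < n) :
    cycPatFn k n hpos (patWitness n k) = true := by
  simp only [cycPatFn, decide_eq_true_eq]
  exact ⟨0, gPat_of_eq_patOne hk fun m hm => by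
    simp [patWitness, Nat.mod_eq_of_lt (hm.trans_le hn)]⟩

theorem cycPatFn_flipBit_of_eq_true (hk : 3 ≤ k) (hpos : 0 < n) {x : Fin n → Bool}
    (hx : ∀ j, x j = true → PatOne k j) {i : Fin n} (hi : x i = true) :
    cycPatFn k n hpos (flipBit x i) = false := by
  simp only [cycPatFn, decide_eq_false_iff_not]
  rintro ⟨ℓ, hG⟩
  have hle := card_le_card_filter_of_shift hpos (ℓ := ℓ) (A := univ.filter fun j => x j = true)
    fun j hj => hG.eq_true_of_patOne hk (hx j (mem_filter.1 hj).2)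
  have hmem : i ∈ univ.filter fun j => x j = true := by simpa using hi
  rw [filter_flipBit_eq_erase hi, card_erase_of_mem hmem] at hle
  have := card_pos.2 ⟨i, hmem⟩
  omega

theorem cycPatFn_flipBit_patWitness_of_gap (hk : 4 ≤ k) (hn : k * k ≤ n) (hpos : 0 < n)
    {i : Fin n} (hi : 2 ≤ (i : ℕ)) (hik : (i : ℕ) < k) :
    cycPatFn k n hpos (flipBit (patWitness n k) i) = false := by
  have hi0 : patWitness n k i = false := by
    have : 4 * k ≤ k * k := Nat.mul_le_mul_right k hk
    simp only [patWitness, decide_eq_false_iff_not]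
    unfold PatOne
    omega
  have hy (p : Fin n) : flipBit (patWitness n k) i p = true ↔ PatOne k p ∨ (p : ℕ) = i := by
    simp [flipBit_eq_true_iff_of_eq_false hi0, Fin.ext_iff, patWitness]
  simp only [cycPatFn, decide_eq_false_iff_not]
  rintro ⟨ℓ, hblock1, hblocks, -⟩
  refine not_cyclic_gap_run (ℓ := ℓ) hk hn hi hik (fun t ht2 htk => ?_) fun t ht => ?_
  · refine (hy ⟨(ℓ + t) % n, Nat.mod_lt _ hpos⟩).not.1 ?_
    simpa [show ¬t < 2 by omega] using hblock1 t htk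
  · refine (hy ⟨(ℓ + (k + t)) % n, Nat.mod_lt _ hpos⟩).1 ?_
    simpa using hblocks 1 le_rfl (by omega) t ht

theorem cycPatFn_flipBit_patWitness (hk : 4 ≤ k) (hn : k * k ≤ n) (hpos : 0 < n) {i : Fin n}
    (hi : PatOne k i ∨ 2 ≤ (i : ℕ) ∧ (i : ℕ) < k) :
    cycPatFn k n hpos (flipBit (patWitness n k) i) = false := by
  rcases hi with hi | ⟨hi2, hik⟩
  · exact cycPatFn_flipBit_of_eq_true (by omega) hpos (fun j hj => of_decide_eq_true hj)
      (decide_eq_true hi)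
  · exact cycPatFn_flipBit_patWitness_of_gap hk hn hpos hi2 hik

end Witness

/-- The sensitive positions `k * a + b` of `patWitness`, as cells `(a, b)` of block `a` and
offset `b`. -/
def sensCells (k : ℕ) : Finset (ℕ × ℕ) :=
  {0} ×ˢ range k ∪ Ico 1 k ×ˢ range 5 ∪ {k - 1} ×ˢ Ico (k - 3) k

section SensCells

variable {k : ℕ}

theorem sensCells_subset (hk : 5 ≤ k) : sensCells k ⊆ range k ×ˢ range k := by
  intro c hc
  simp only [sensCells, mem_union, mem_product, mem_singleton, mem_range, mem_Ico] at hc ⊢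
  omega

theorem card_image_sensCells (hk : 8 ≤ k) :
    #((sensCells k).image fun c => k * c.1 + c.2) = 6 * k - 2 := by
  have hinj : Set.InjOn (fun c : ℕ × ℕ => k * c.1 + c.2) (sensCells k) := by
    intro c hc c' hc' h
    have hb := (mem_product.1 (sensCells_subset (by omega) hc)).2
    have hb' := (mem_product.1 (sensCells_subset (by omega) hc')).2
    rw [mem_range] at hb hb'
    have hdiv := congrArg (· / k) h
    have hmod := congrArg (· % k) h
    simp only [Nat.mul_add_div (by omega : 0 < k), Nat.mul_add_mod, Nat.div_eq_of_lt hb,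
      Nat.div_eq_of_lt hb', Nat.mod_eq_of_lt hb, Nat.mod_eq_of_lt hb', add_zero] at hdiv hmod
    exact Prod.ext hdiv hmod
  have hdisj₁ : Disjoint ({0} ×ˢ range k) (Ico 1 k ×ˢ range 5) :=
    disjoint_product.2 (Or.inl (by simp))
  have hdisj₂ : Disjoint ({0} ×ˢ range k ∪ Ico 1 k ×ˢ range 5) ({k - 1} ×ˢ Ico (k - 3) k) := by
    refine disjoint_union_left.2 ⟨disjoint_product.2 (Or.inl ?_), disjoint_product.2 (Or.inr ?_)⟩
    · simp only [disjoint_singleton]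
      omega
    · rw [disjoint_left]
      simp only [mem_range, mem_Ico]
      omega
  rw [card_image_of_injOn hinj, sensCells, card_union_of_disjoint hdisj₂,
    card_union_of_disjoint hdisj₁]
  simp only [card_product, card_singleton, card_range, Nat.card_Ico]
  omega

theorem sensitive_of_mem_sensCells (hk : 8 ≤ k) {a b : ℕ} (hc : (a, b) ∈ sensCells k) :
    k * a + b < k * k ∧ (PatOne k (k * a + b) ∨ 2 ≤ k * a + b ∧ k * a + b < k) := by
  have hsub : k * (k - 1) + k = k * k := by
    rw [Nat.mul_sub_one]; exact Nat.sub_add_cancel (Nat.le_mul_self k)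
  simp only [sensCells, mem_union, mem_product, mem_singleton, mem_range, mem_Ico] at hc
  rcases hc with (⟨rfl, hb⟩ | ⟨⟨ha, hak⟩, hb⟩) | ⟨rfl, hb⟩
  · simp only [mul_zero, zero_add]
    have : k ≤ k * k := Nat.le_mul_self k
    refine ⟨by omega, ?_⟩
    by_cases hb2 : b < 2
    exacts [Or.inl (Or.inl hb2), Or.inr ⟨by omega, hb⟩]
  · have hka : k ≤ k * a := Nat.le_mul_of_pos_right k ha
    have hak' : k * a + k ≤ k * k := by
      rw [← Nat.mul_succ]; exact Nat.mul_le_mul_left k hak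
    refine ⟨by omega, Or.inl (Or.inr (Or.inl ⟨by omega, by omega, ?_⟩))⟩
    rw [Nat.mul_add_mod, Nat.mod_eq_of_lt (by omega)]
    exact hb
  · exact ⟨by omega, Or.inl (Or.inr (Or.inr ⟨by omega, by omega⟩))⟩

end SensCells

/-- The 1-sensitivity of the cyclic pattern function is at least `6k-2`. -/
theorem cycPatFn_sens1_lower {k n : ℕ} (h8 : 8 ≤ k) (hn : k ^ 2 ≤ n)
    (hpos : 0 < n) :
    6 * k - 2 ≤ sens1 (cycPatFn k n hpos) := by
  have hkk : k * k ≤ n := by rwa [sq] at hn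
  have hx := cycPatFn_patWitness (by omega) hkk hpos
  calc 6 * k - 2 = #((sensCells k).image fun c => k * c.1 + c.2) :=
        (card_image_sensCells h8).symm
    _ ≤ sensAt (cycPatFn k n hpos) (patWitness n k) := card_le_sensAt fun m hm => by
      obtain ⟨⟨a, b⟩, hc, rfl⟩ := mem_image.1 hm
      obtain ⟨hlt, hsens⟩ := sensitive_of_mem_sensCells h8 hc
      refine ⟨⟨_, hlt.trans_le hkk⟩, rfl, ?_⟩
      rw [hx, cycPatFn_flipBit_patWitness (by omega) hkk hpos hsens]
      decide
    _ ≤ sens1 (cycPatFn k n hpos) := le_sup (mem_filter.2 ⟨mem_univ _, hx⟩)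
end
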